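/- (Partition-of-unity eigenvalue comparison, discrete IMS localization) Let (η_k)_{k ∈ K} be finitely supported functions on ℤ^d with Σ_k η_k(z)² = 1 for all z, and define Φ(z) = κ Σ_k |∇η_k(z)|², where |∇f(z)|² = Σ_{y ∼ z}(f(y)-f(z))². Then for every g : ℤ^d → ℝ with ‖g‖₂ = 1 and every potential V ≤ 0: Σ_z [-κ|∇g(z)|² + (V(z)-Φ(z))g(z)²] ≤ Σ_k ‖g η_k‖₂² · G^V(g η_k / ‖g η_k‖₂), where G^V(h) = Σ_z [-κ|∇h(z)|² + V(z)h(z)²]. Consequently the principal Dirichlet eigenvalue of κΔ^d + V - Φ in any box is at most the maximum over k of the principal Dirichlet eigenvalue of κΔ^d + V on the support of η_k. -/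

import Mathlib

open scoped BigOperators

/-- Discrete squared gradient: `|∇f(z)|² = ∑_{y ∼ z} (f(y) - f(z))²`,
the sum running over the `2d` nearest neighbors of `z` in `ℤ^d`. -/
noncomputable def gradSq (d : ℕ) (f : (Fin d → ℤ) → ℝ) (z : Fin d → ℤ) : ℝ :=
  ∑ i : Fin d,
    ((f (z + Pi.single i 1) - f z) ^ 2 + (f (z - Pi.single i 1) - f z) ^ 2)

/-- The quadratic form `G^V(h) = ∑_z [-κ|∇h(z)|² + V(z)h(z)²]`, with values
in `EReal` since `V` may take the value `-∞`. -/
noncomputable def quadForm (d : ℕ) (κ : ℝ) (V : (Fin d → ℤ) → EReal)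
    (h : (Fin d → ℤ) → ℝ) : EReal :=
  ∑' z, (-(((κ * gradSq d h z : ℝ)) : EReal) + V z * (((h z) ^ 2 : ℝ) : EReal))

/-- Principal Dirichlet eigenvalue of `κΔᵈ + V` on a region `S ⊆ ℤ^d`, via
the Rayleigh–Ritz formula over finitely supported `ℓ²`-normalized functions. -/
noncomputable def principalEV (d : ℕ) (κ : ℝ) (S : Set (Fin d → ℤ))
    (V : (Fin d → ℤ) → EReal) : EReal :=
  sSup { r : EReal | ∃ g : (Fin d → ℤ) → ℝ,
    (Function.support g).Finite ∧ (∑' z, (g z) ^ 2) = 1 ∧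
    Function.support g ⊆ S ∧ r = quadForm d κ V g }

/-!
Since `V ≤ 0`, write `V = -W` with `W` valued in `[0, ∞]`: then `-G^V` is a sum of nonnegative
terms, and sums can be freely interchanged in `ℝ≥0∞`. Localization preserves the potential part
because `∑ₖ ηₖ² = 1`. On every edge `{x, y}`, expanding and using `∑ₖ ηₖ² = 1` at both ends gives
`∑ₖ (g(y)ηₖ(y) - g(x)ηₖ(x))² = (g(y) - g(x))² + g(x)g(y) ∑ₖ (ηₖ(y) - ηₖ(x))²`,
and `2 g(x)g(y) ≤ g(x)² + g(y)²` bounds the error by `Φ`; summing over edges yields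
`G^{V-Φ}(g) ≤ ∑ₖ G^V(gηₖ) = ∑ₖ ‖gηₖ‖² G^V(gηₖ/‖gηₖ‖)`. For the eigenvalue bound, each `gηₖ/‖gηₖ‖`
is a test function on `supp ηₖ`, and the weights `‖gηₖ‖²` sum to `‖g‖² = 1`.
-/

open scoped ENNReal

namespace EReal

lemma exists_eq_neg_coe_ennreal_of_nonpos {x : EReal} (hx : x ≤ 0) :
    ∃ q : ℝ≥0∞, x = -(q : EReal) := by
  obtain ⟨q, hq⟩ : ∃ q : ℝ≥0∞, (q : EReal) = -x := CanLift.prf (-x) (EReal.neg_nonneg.2 hx)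
  exact ⟨q, by rw [hq, neg_neg]⟩

lemma neg_coe_ennreal_add (a b : ℝ≥0∞) :
    -((a + b : ℝ≥0∞) : EReal) = -(a : EReal) + -(b : EReal) := by
  rw [coe_ennreal_add, EReal.neg_add (.inl (coe_ennreal_ne_bot a)) (.inr (coe_ennreal_ne_bot b)),
    sub_eq_add_neg]

lemma tsum_neg_coe_ennreal {ι : Type*} (q : ι → ℝ≥0∞) :
    ∑' i, -(q i : EReal) = -((∑' i, q i : ℝ≥0∞) : EReal) :=
  let negCoe : ℝ≥0∞ →+ EReal :=
    { toFun := fun x => -(x : EReal), map_zero' := by simp, map_add' := neg_coe_ennreal_add }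
  (ENNReal.summable.hasSum.map negCoe (continuous_neg.comp continuous_coe_ennreal_ereal)).tsum_eq

lemma coe_ennreal_ofReal_of_nonneg {x : ℝ} (hx : 0 ≤ x) :
    ((ENNReal.ofReal x : ℝ≥0∞) : EReal) = (x : EReal) := by
  rw [coe_ennreal_ofReal, max_eq_left hx]

end EReal

lemma hasSum_of_tsum_eq_one {K : Type*} {f : K → ℝ} (hf : ∑' k, f k = 1) : HasSum f 1 := by
  by_cases hs : Summable f
  · exact hf ▸ hs.hasSum
  · simp [tsum_eq_zero_of_not_summable hs] at hf

lemma summable_sq_mul_of_support_finite {α : Type*} {g : α → ℝ} (hg : (Function.support g).Finite)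
    (f : α → ℝ) : Summable fun z => (g z * f z) ^ 2 :=
  summable_of_hasFiniteSupport <| hg.subset fun z hz h0 => hz (by simp [h0])

lemma tsum_sq_div_sqrt_tsum_sq {α : Type*} {h : α → ℝ} (hh : 0 < ∑' z, h z ^ 2) :
    ∑' z, (h z / √(∑' w, h w ^ 2)) ^ 2 = 1 := by
  simp_rw [div_pow, Real.sq_sqrt hh.le, tsum_div_const, div_self hh.ne']

section PartitionOfUnity

variable {K : Type*} {p q : K → ℝ}

lemma summable_sq_sub (hp : Summable fun k => p k ^ 2) (hq : Summable fun k => q k ^ 2) :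
    Summable fun k => (p k - q k) ^ 2 :=
  .of_nonneg_of_le (fun k => sq_nonneg _) (fun k => by nlinarith [sq_nonneg (p k + q k)])
    ((hp.add hq).mul_left 2)

lemma hasSum_sq_mul_sub_mul (hp : HasSum (fun k => p k ^ 2) 1) (hq : HasSum (fun k => q k ^ 2) 1)
    (a b : ℝ) :
    HasSum (fun k => (a * p k - b * q k) ^ 2) ((a - b) ^ 2 + a * b * ∑' k, (p k - q k) ^ 2) := by
  have hf : (fun k => (a * p k - b * q k) ^ 2) = fun k =>
      a * b * (p k - q k) ^ 2 + (a ^ 2 - a * b) * p k ^ 2 + (b ^ 2 - a * b) * q k ^ 2 :=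
    funext fun k => by ring
  rw [hf, show (a - b) ^ 2 + a * b * ∑' k, (p k - q k) ^ 2 =
    a * b * ∑' k, (p k - q k) ^ 2 + (a ^ 2 - a * b) * 1 + (b ^ 2 - a * b) * 1 by ring]
  exact (((summable_sq_sub hp.summable hq.summable).hasSum.mul_left (a * b)).add
    (hp.mul_left _)).add (hq.mul_left _)

lemma two_mul_tsum_ofReal_sq_mul_sub_mul_le (hp : HasSum (fun k => p k ^ 2) 1)
    (hq : HasSum (fun k => q k ^ 2) 1) (a b : ℝ) :
    2 * ∑' k, ENNReal.ofReal ((a * p k - b * q k) ^ 2) ≤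
      2 * ENNReal.ofReal ((a - b) ^ 2) +
        (∑' k, ENNReal.ofReal ((p k - q k) ^ 2)) * (ENNReal.ofReal (a ^ 2) + ENNReal.ofReal (b ^ 2)) := by
  have hsum := hasSum_sq_mul_sub_mul hp hq a b
  set S := ∑' k, (p k - q k) ^ 2
  have hS : 0 ≤ S := tsum_nonneg fun k => sq_nonneg _
  rw [← ENNReal.ofReal_tsum_of_nonneg (fun k => sq_nonneg _) hsum.summable, hsum.tsum_eq,
    ← ENNReal.ofReal_tsum_of_nonneg (fun k => sq_nonneg _) (summable_sq_sub hp.summable hq.summable),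
    ← ENNReal.ofReal_add (sq_nonneg a) (sq_nonneg b), ← ENNReal.ofReal_mul hS,
    ← ENNReal.ofReal_ofNat 2, ← ENNReal.ofReal_mul zero_le_two, ← ENNReal.ofReal_mul zero_le_two,
    ← ENNReal.ofReal_add (by positivity) (by positivity)]
  exact ENNReal.ofReal_le_ofReal (by nlinarith [mul_nonneg hS (sq_nonneg (a - b))])

lemma tsum_ofReal_sq_mul_sub_mul_add_tsum_le {A : Type*} {η : K → A → ℝ}
    (hη : ∀ z, HasSum (fun k => η k z ^ 2) 1) (g : A → ℝ) (x y : A) :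
    ∑' k, ENNReal.ofReal ((g y * η k y - g x * η k x) ^ 2) +
        ∑' k, ENNReal.ofReal ((g x * η k x - g y * η k y) ^ 2) ≤
      (ENNReal.ofReal ((g y - g x) ^ 2) +
          (∑' k, ENNReal.ofReal ((η k y - η k x) ^ 2)) * ENNReal.ofReal (g x ^ 2)) +
        (ENNReal.ofReal ((g x - g y) ^ 2) +
          (∑' k, ENNReal.ofReal ((η k x - η k y) ^ 2)) * ENNReal.ofReal (g y ^ 2)) := by
  have hsymm (u v : ℝ) : ENNReal.ofReal ((u - v) ^ 2) = ENNReal.ofReal ((v - u) ^ 2) := by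
    rw [sub_sq_comm]
  rw [tsum_congr fun k => hsymm (g x * η k x) _, hsymm (g x), tsum_congr fun k => hsymm (η k x) _,
    ← two_mul]
  calc _ ≤ _ := two_mul_tsum_ofReal_sq_mul_sub_mul_le (hη y) (hη x) (g y) (g x)
    _ = _ := by ring

lemma tsum_ofReal_sq_mul (hp : HasSum (fun k => p k ^ 2) 1) (a : ℝ) :
    ∑' k, ENNReal.ofReal ((a * p k) ^ 2) = ENNReal.ofReal (a ^ 2) := by
  have h : HasSum (fun k => (a * p k) ^ 2) (a ^ 2) := by
    simpa [mul_pow] using hp.mul_left (a ^ 2)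
  rw [← ENNReal.ofReal_tsum_of_nonneg (fun k => sq_nonneg _) h.summable, h.tsum_eq]

end PartitionOfUnity

section Lattice

variable {d : ℕ}

lemma gradSq_nonneg (f : (Fin d → ℤ) → ℝ) (z : Fin d → ℤ) : 0 ≤ gradSq d f z :=
  Finset.sum_nonneg fun i _ => by positivity

lemma gradSq_const_mul (c : ℝ) (f : (Fin d → ℤ) → ℝ) (z : Fin d → ℤ) :
    gradSq d (fun w => c * f w) z = c ^ 2 * gradSq d f z := by
  simp only [gradSq, Finset.mul_sum]
  exact Finset.sum_congr rfl fun i _ => by ring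

lemma ofReal_gradSq (f : (Fin d → ℤ) → ℝ) (z : Fin d → ℤ) :
    ENNReal.ofReal (gradSq d f z) =
      ∑ i, (ENNReal.ofReal ((f (z + Pi.single i 1) - f z) ^ 2) +
        ENNReal.ofReal ((f (z - Pi.single i 1) - f z) ^ 2)) := by
  rw [gradSq, ENNReal.ofReal_sum_of_nonneg fun i _ => by positivity]
  exact Finset.sum_congr rfl fun i _ => ENNReal.ofReal_add (sq_nonneg _) (sq_nonneg _)

/-- Each edge `{z, z + eᵢ}` is seen once from each endpoint. -/
lemma tsum_sum_neighbours (F : (Fin d → ℤ) → (Fin d → ℤ) → ℝ≥0∞) :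
    ∑' z, ∑ i, (F z (z + Pi.single i 1) + F z (z - Pi.single i 1)) =
      ∑ i, ∑' z, (F z (z + Pi.single i 1) + F (z + Pi.single i 1) z) := by
  rw [Summable.tsum_finsetSum fun i _ => ENNReal.summable]
  refine Finset.sum_congr rfl fun i _ => ?_
  rw [ENNReal.tsum_add, ENNReal.tsum_add]
  have hshift := (Equiv.addRight (Pi.single i 1 : Fin d → ℤ)).tsum_eq fun z => F z (z - Pi.single i 1)
  simp only [Equiv.coe_addRight, add_sub_cancel_right] at hshift
  rw [hshift]

variable {K : Type*} (η : K → (Fin d → ℤ) → ℝ)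

lemma summable_gradSq (hη : ∀ z, HasSum (fun k => η k z ^ 2) 1) (z : Fin d → ℤ) :
    Summable fun k => gradSq d (η k) z :=
  summable_sum fun _ _ => (summable_sq_sub (hη _).summable (hη z).summable).add
    (summable_sq_sub (hη _).summable (hη z).summable)

lemma tsum_tsum_ofReal_gradSq_mul_le (hη : ∀ z, HasSum (fun k => η k z ^ 2) 1)
    (g : (Fin d → ℤ) → ℝ) :
    ∑' z, ∑' k, ENNReal.ofReal (gradSq d (fun w => g w * η k w) z) ≤
      ∑' z, (ENNReal.ofReal (gradSq d g z) +
        (∑' k, ENNReal.ofReal (gradSq d (η k) z)) * ENNReal.ofReal (g z ^ 2)) := by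
  set FL := fun x y => ∑' k, ENNReal.ofReal ((g y * η k y - g x * η k x) ^ 2)
  set FR := fun x y => ENNReal.ofReal ((g y - g x) ^ 2) +
    (∑' k, ENNReal.ofReal ((η k y - η k x) ^ 2)) * ENNReal.ofReal (g x ^ 2)
  have hL (z) : ∑' k, ENNReal.ofReal (gradSq d (fun w => g w * η k w) z) =
      ∑ i, (FL z (z + Pi.single i 1) + FL z (z - Pi.single i 1)) := by
    simp only [ofReal_gradSq]
    rw [Summable.tsum_finsetSum fun i _ => ENNReal.summable]
    exact Finset.sum_congr rfl fun i _ => ENNReal.tsum_add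
  have hR (z) : ENNReal.ofReal (gradSq d g z) +
        (∑' k, ENNReal.ofReal (gradSq d (η k) z)) * ENNReal.ofReal (g z ^ 2) =
      ∑ i, (FR z (z + Pi.single i 1) + FR z (z - Pi.single i 1)) := by
    simp only [ofReal_gradSq]
    rw [Summable.tsum_finsetSum fun i _ => ENNReal.summable, Finset.sum_mul,
      ← Finset.sum_add_distrib]
    refine Finset.sum_congr rfl fun i _ => ?_
    rw [ENNReal.tsum_add]
    ring
  rw [tsum_congr hL, tsum_congr hR, tsum_sum_neighbours FL, tsum_sum_neighbours FR]
  exact Finset.sum_le_sum fun i _ => ENNReal.tsum_le_tsum fun z =>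
    tsum_ofReal_sq_mul_sub_mul_add_tsum_le hη g z _

end Lattice

section Energy

variable {d : ℕ} {κ : ℝ}

/-- `-G^V` for a potential `V = -W ≤ 0`; in `ℝ≥0∞` all the sums are unconditional. -/
noncomputable def energyForm (d : ℕ) (κ : ℝ) (W : (Fin d → ℤ) → ℝ≥0∞)
    (h : (Fin d → ℤ) → ℝ) : ℝ≥0∞ :=
  ∑' z, (ENNReal.ofReal (κ * gradSq d h z) + W z * ENNReal.ofReal (h z ^ 2))

lemma quadForm_neg_eq_neg_energyForm (hκ : 0 ≤ κ) (W : (Fin d → ℤ) → ℝ≥0∞)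
    (h : (Fin d → ℤ) → ℝ) :
    quadForm d κ (fun z => -(W z : EReal)) h = -(energyForm d κ W h : EReal) := by
  rw [quadForm, energyForm, ← EReal.tsum_neg_coe_ennreal]
  refine tsum_congr fun z => ?_
  rw [EReal.neg_coe_ennreal_add, EReal.coe_ennreal_mul, neg_mul,
    EReal.coe_ennreal_ofReal_of_nonneg (mul_nonneg hκ (gradSq_nonneg h z)),
    EReal.coe_ennreal_ofReal_of_nonneg (sq_nonneg _)]

lemma energyForm_const_mul (W : (Fin d → ℤ) → ℝ≥0∞) (c : ℝ) (h : (Fin d → ℤ) → ℝ) :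
    energyForm d κ W (fun z => c * h z) = ENNReal.ofReal (c ^ 2) * energyForm d κ W h := by
  rw [energyForm, energyForm, ← ENNReal.tsum_mul_left]
  refine tsum_congr fun z => ?_
  rw [gradSq_const_mul, mul_pow, mul_left_comm, ENNReal.ofReal_mul (sq_nonneg c),
    ENNReal.ofReal_mul (sq_nonneg c)]
  ring

lemma ofReal_tsum_sq_mul_energyForm_div_sqrt (W : (Fin d → ℤ) → ℝ≥0∞) {h : (Fin d → ℤ) → ℝ}
    (hh : Summable fun z => h z ^ 2) :
    ENNReal.ofReal (∑' z, h z ^ 2) *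
        energyForm d κ W (fun z => h z / √(∑' w, h w ^ 2)) = energyForm d κ W h := by
  rcases (tsum_nonneg fun z => sq_nonneg (h z)).eq_or_lt with hN | hN
  · have h0 : h = 0 := by
      have := (hasSum_zero_iff_of_nonneg fun z => sq_nonneg (h z)).1 (hN ▸ hh.hasSum)
      funext z
      simpa using congrFun this z
    subst h0
    simp [energyForm, gradSq]
  · simp_rw [div_eq_inv_mul, energyForm_const_mul, ← mul_assoc, ← ENNReal.ofReal_mul hN.le,
      inv_pow, Real.sq_sqrt hN.le, mul_inv_cancel₀ hN.ne', ENNReal.ofReal_one, one_mul]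

end Energy

lemma quadForm_le_principalEV {d : ℕ} {κ : ℝ} {S : Set (Fin d → ℤ)} {V : (Fin d → ℤ) → EReal}
    {h : (Fin d → ℤ) → ℝ} (hfin : (Function.support h).Finite) (hh : ∑' z, h z ^ 2 = 1)
    (hS : Function.support h ⊆ S) : quadForm d κ V h ≤ principalEV d κ S V :=
  le_sSup ⟨h, hfin, hh, hS, rfl⟩

section Localization

variable {d : ℕ} {κ : ℝ} {K : Type*} {η : K → (Fin d → ℤ) → ℝ}

lemma tsum_energyForm_mul_le (hκ : 0 ≤ κ) (hη : ∀ z, HasSum (fun k => η k z ^ 2) 1)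
    (W : (Fin d → ℤ) → ℝ≥0∞) (g : (Fin d → ℤ) → ℝ) :
    ∑' k, energyForm d κ W (fun z => g z * η k z) ≤
      energyForm d κ
        (fun z => W z + ENNReal.ofReal (κ * ∑' k, gradSq d (η k) z)) g := by
  have hW : ∑' k, ∑' z, W z * ENNReal.ofReal ((g z * η k z) ^ 2) =
      ∑' z, W z * ENNReal.ofReal (g z ^ 2) := by
    rw [ENNReal.tsum_comm]
    exact tsum_congr fun z => by rw [ENNReal.tsum_mul_left, tsum_ofReal_sq_mul (hη z)]
  calc ∑' k, energyForm d κ W (fun z => g z * η k z)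
      = ENNReal.ofReal κ * ∑' z, ∑' k, ENNReal.ofReal (gradSq d (fun w => g w * η k w) z) +
          ∑' z, W z * ENNReal.ofReal (g z ^ 2) := by
        simp only [energyForm, ENNReal.tsum_add, ENNReal.ofReal_mul hκ, ENNReal.tsum_mul_left, hW]
        rw [ENNReal.tsum_comm]
    _ ≤ ENNReal.ofReal κ * ∑' z, (ENNReal.ofReal (gradSq d g z) +
            (∑' k, ENNReal.ofReal (gradSq d (η k) z)) * ENNReal.ofReal (g z ^ 2)) +
          ∑' z, W z * ENNReal.ofReal (g z ^ 2) := by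
        gcongr ENNReal.ofReal κ * ?_ + _
        exact tsum_tsum_ofReal_gradSq_mul_le η hη g
    _ = _ := by
        rw [energyForm, ← ENNReal.tsum_mul_left, ← ENNReal.tsum_add]
        refine tsum_congr fun z => ?_
        rw [ENNReal.ofReal_mul hκ, ENNReal.ofReal_mul hκ, ENNReal.ofReal_tsum_of_nonneg
          (fun k => gradSq_nonneg _ z) (summable_gradSq η hη z)]
        ring

lemma tsum_ofReal_tsum_sq_mul_eq_one (hη : ∀ z, HasSum (fun k => η k z ^ 2) 1)
    {g : (Fin d → ℤ) → ℝ} (hg : (Function.support g).Finite) (hg1 : ∑' z, g z ^ 2 = 1) :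
    ∑' k, ENNReal.ofReal (∑' z, (g z * η k z) ^ 2) = 1 := by
  rw [tsum_congr fun k => ENNReal.ofReal_tsum_of_nonneg (fun _ => sq_nonneg _)
      (summable_sq_mul_of_support_finite hg (η k)), ENNReal.tsum_comm,
    tsum_congr fun z => tsum_ofReal_sq_mul (hη z) (g z),
    ← ENNReal.ofReal_tsum_of_nonneg (fun _ => sq_nonneg _) (hasSum_of_tsum_eq_one hg1).summable,
    hg1, ENNReal.ofReal_one]

lemma neg_tsum_energyForm_mul_le_iSup_principalEV (hκ : 0 ≤ κ)
    (hfin : ∀ k, (Function.support (η k)).Finite) (hη : ∀ z, HasSum (fun k => η k z ^ 2) 1)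
    (W : (Fin d → ℤ) → ℝ≥0∞) {g : (Fin d → ℤ) → ℝ} (hg : (Function.support g).Finite)
    (hg1 : ∑' z, g z ^ 2 = 1) :
    -((∑' k, energyForm d κ W (fun z => g z * η k z) : ℝ≥0∞) : EReal) ≤
      ⨆ k, principalEV d κ (Function.support (η k)) (fun z => -(W z : EReal)) := by
  have hc : ⨆ k, principalEV d κ (Function.support (η k)) (fun z => -(W z : EReal)) ≤ 0 :=
    iSup_le fun k => sSup_le <| by
      rintro _ ⟨h, -, -, -, rfl⟩
      rw [quadForm_neg_eq_neg_energyForm hκ]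
      exact EReal.neg_le_zero.2 (EReal.coe_ennreal_nonneg _)
  obtain ⟨γ, hγ⟩ := EReal.exists_eq_neg_coe_ennreal_of_nonpos hc
  rw [hγ, EReal.neg_le_neg_iff, EReal.coe_ennreal_le_coe_ennreal_iff]
  have hk (k : K) : ENNReal.ofReal (∑' z, (g z * η k z) ^ 2) * γ ≤
      energyForm d κ W (fun z => g z * η k z) := by
    rcases (tsum_nonneg fun z => sq_nonneg (g z * η k z)).eq_or_lt with hN | hN
    · rw [← hN, ENNReal.ofReal_zero, zero_mul]
      exact zero_le
    rw [← ofReal_tsum_sq_mul_energyForm_div_sqrt W (summable_sq_mul_of_support_finite hg (η k))]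
    gcongr
    have hsupp : Function.support (fun z => g z * η k z / √(∑' w, (g w * η k w) ^ 2)) ⊆
        Function.support (η k) := fun z hz h0 => hz (by simp [h0])
    rw [← EReal.coe_ennreal_le_coe_ennreal_iff, ← EReal.neg_le_neg_iff, ← hγ,
      ← quadForm_neg_eq_neg_energyForm hκ]
    exact (quadForm_le_principalEV ((hfin k).subset hsupp) (tsum_sq_div_sqrt_tsum_sq hN)
      hsupp).trans (le_iSup_of_le k le_rfl)
  calc γ = (∑' k, ENNReal.ofReal (∑' z, (g z * η k z) ^ 2)) * γ := by
        rw [tsum_ofReal_tsum_sq_mul_eq_one hη hg hg1, one_mul]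
    _ = ∑' k, ENNReal.ofReal (∑' z, (g z * η k z) ^ 2) * γ := ENNReal.tsum_mul_right.symm
    _ ≤ _ := ENNReal.tsum_le_tsum hk

end Localization

/-- Discrete IMS localization: given a partition of unity `∑_k η_k² ≡ 1` with
localization error `Φ = κ ∑_k |∇η_k|²`, for every normalized `g` one has
`G^{V-Φ}(g) ≤ ∑_k ‖gη_k‖₂² G^V(gη_k/‖gη_k‖₂)`; consequently the principal
Dirichlet eigenvalue of `κΔᵈ + V - Φ` on any region is at most the supremum
over `k` of the principal eigenvalue of `κΔᵈ + V` on `supp η_k`. -/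
theorem stmt_14 (d : ℕ) (κ : ℝ) (hκ : 0 < κ) {K : Type*}
    (η : K → (Fin d → ℤ) → ℝ)
    (hfin : ∀ k, (Function.support (η k)).Finite)
    (hpart : ∀ z, ∑' k, (η k z) ^ 2 = 1)
    (V : (Fin d → ℤ) → EReal) (hV : ∀ z, V z ≤ 0)
    (Φ : (Fin d → ℤ) → ℝ)
    (hΦ : ∀ z, Φ z = κ * ∑' k, gradSq d (η k) z) :
    (∀ g : (Fin d → ℤ) → ℝ, (Function.support g).Finite →
      (∑' z, (g z) ^ 2) = 1 →
      (∑' z, (-(((κ * gradSq d g z : ℝ)) : EReal) +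
          (V z - ((Φ z : ℝ) : EReal)) * (((g z) ^ 2 : ℝ) : EReal))) ≤
        ∑' k, ((((∑' z, (g z * η k z) ^ 2 : ℝ)) : EReal) *
          quadForm d κ V
            (fun z => g z * η k z / Real.sqrt (∑' w, (g w * η k w) ^ 2)))) ∧
      ∀ S : Set (Fin d → ℤ),
        principalEV d κ S (fun z => V z - ((Φ z : ℝ) : EReal)) ≤
          ⨆ k, principalEV d κ (Function.support (η k)) V := by
  choose W hW using fun z => EReal.exists_eq_neg_coe_ennreal_of_nonpos (hV z)
  obtain rfl : V = fun z => -(W z : EReal) := funext hW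
  have hη (z) : HasSum (fun k => η k z ^ 2) 1 := hasSum_of_tsum_eq_one (hpart z)
  have hΦW : (fun z => -(W z : EReal) - ((Φ z : ℝ) : EReal)) = fun z =>
      -((W z + ENNReal.ofReal (κ * ∑' k, gradSq d (η k) z) : ℝ≥0∞) : EReal) := by
    funext z
    have hΦ0 : 0 ≤ Φ z := hΦ z ▸ mul_nonneg hκ.le (tsum_nonneg fun k => gradSq_nonneg _ z)
    rw [← hΦ z, EReal.neg_coe_ennreal_add, EReal.coe_ennreal_ofReal_of_nonneg hΦ0, sub_eq_add_neg]
  have hIMS (g : (Fin d → ℤ) → ℝ) :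
      quadForm d κ (fun z => -(W z : EReal) - ((Φ z : ℝ) : EReal)) g ≤
        -((∑' k, energyForm d κ W (fun z => g z * η k z) : ℝ≥0∞) : EReal) := by
    rw [hΦW, quadForm_neg_eq_neg_energyForm hκ.le, EReal.neg_le_neg_iff,
      EReal.coe_ennreal_le_coe_ennreal_iff]
    exact tsum_energyForm_mul_le hκ.le hη W g
  refine ⟨fun g hg _ => (hIMS g).trans_eq ?_, fun S => sSup_le ?_⟩
  · rw [← EReal.tsum_neg_coe_ennreal]
    refine tsum_congr fun k => ?_
    rw [quadForm_neg_eq_neg_energyForm hκ.le, mul_neg, ← EReal.coe_ennreal_ofReal_of_nonneg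
      (tsum_nonneg fun z => sq_nonneg _), ← EReal.coe_ennreal_mul,
      ofReal_tsum_sq_mul_energyForm_div_sqrt W (summable_sq_mul_of_support_finite hg (η k))]
  · rintro _ ⟨g, hg, hg1, -, rfl⟩
    exact (hIMS g).trans (neg_tsum_energyForm_mul_le_iSup_principalEV hκ.le hfin hη W hg hg1)
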